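/- Let u ≥ 0 solve Δu = f χ_{{u>0}} near 0 ∈ ∂{u > 0} with f ≥ λ > 0 bounded near the free boundary. Then quadratic nondegeneracy holds: sup_{B_r(0)} u ≥ (λ/(2d)) r² for all sufficiently small r > 0. -/

import Mathlib

/-
Comparison with a paraboloid. Take `x₀` near `0` with `u x₀ > 0` and `a < λ / (2d)`. The maximum
of `u - a‖· - x₀‖²` over a closed ball `B_ρ(x₀)` is at least `u x₀ > 0`, so it sits in `{u > 0}`,
where `Δu = f ≥ λ`. At an interior maximum `Δu ≤ 2ad < λ`, so the maximum lies on the sphere and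
`u ≥ aρ²` there. Letting `x₀ → 0` and `a → λ / (2d)` gives the bound.

As `u` is only continuous and `lap` is built from `fderiv`, the bound `Δu ≤ 2ad` at a maximum is
proved along a coordinate line: a second partial derivative above `2a` forces the first partial
to be differentiable at the point, and `u` to be differentiable wherever that first partial is
nonzero (elsewhere it is a junk `0`). This is enough to run the mean value theorem on one side of
the maximum.
-/

open MeasureTheory Metric Set

/-- Laplacian as the sum of second partial derivatives. -/
noncomputable def lap {d : ℕ} (u : EuclideanSpace ℝ (Fin d) → ℝ)
    (x : EuclideanSpace ℝ (Fin d)) : ℝ :=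
  ∑ i, fderiv ℝ (fun y => fderiv ℝ u y (EuclideanSpace.single i 1)) x
    (EuclideanSpace.single i 1)

open Filter Topology

theorem not_isLocalMax_of_eventually_hasDerivAt_pos {k : ℝ → ℝ} {x : ℝ}
    (hk : ContinuousAt k x) (hderiv : ∀ᶠ t in 𝓝[>] x, ∃ c : ℝ, 0 < c ∧ HasDerivAt k c t) :
    ¬ IsLocalMax k x := by
  intro hmax
  have hmax' : ∀ᶠ t in 𝓝[>] x, k t ≤ k x := nhdsWithin_le_nhds hmax
  obtain ⟨σ, hσ, hsub⟩ := mem_nhdsGT_iff_exists_Ioc_subset.1 (hderiv.and hmax')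
  have hsub : ∀ t ∈ Ioc x σ, (∃ c : ℝ, 0 < c ∧ HasDerivAt k c t) ∧ k t ≤ k x := hsub
  choose! k' hk'pos hk' using fun t ht => (hsub t ht).1
  have hcont : ContinuousOn k (Icc x σ) := by
    intro t ht
    rcases ht.1.eq_or_lt with rfl | hxt
    · exact hk.continuousWithinAt
    · exact (hk' t ⟨hxt, ht.2⟩).continuousAt.continuousWithinAt
  obtain ⟨ξ, hξ, hslope⟩ := exists_hasDerivAt_eq_slope k k' hσ hcont
    fun t ht => hk' t (Ioo_subset_Ioc_self ht)
  have hpos := hk'pos ξ (Ioo_subset_Ioc_self hξ)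
  rw [hslope, div_pos_iff_of_pos_right (sub_pos.2 hσ)] at hpos
  linarith [(hsub σ ⟨hσ, le_rfl⟩).2]

theorem hasDerivAt_quadratic (a b t : ℝ) :
    HasDerivAt (fun t => a * t ^ 2 + b * t) (2 * a * t + b) t := by
  simpa [mul_comm, mul_left_comm, mul_assoc] using
    ((hasDerivAt_pow 2 t).const_mul a).fun_add ((hasDerivAt_id' t).const_mul b)

theorem not_isLocalMax_sub_quadratic_of_max_le {g φ : ℝ → ℝ} {a b c : ℝ}
    (hg : ContinuousAt g 0) (hφ : HasDerivAt φ c 0) (ha : 0 ≤ a) (hc : 2 * a < c)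
    (hderiv : ∀ t, 0 < φ t → HasDerivAt g (φ t) t) (hφ₀ : max 0 b ≤ φ 0) :
    ¬ IsLocalMax (fun t => g t - (a * t ^ 2 + b * t)) 0 := by
  refine not_isLocalMax_of_eventually_hasDerivAt_pos (by fun_prop) ?_
  obtain ⟨c', hc', hc'c⟩ := exists_between hc
  have hslope : ∀ᶠ t in 𝓝[>] 0, c' < slope φ 0 t :=
    ((hasDerivWithinAt_iff_tendsto_slope' self_notMem_Ioi).1 hφ.hasDerivWithinAt).eventually
      (lt_mem_nhds hc'c)
  rw [max_le_iff] at hφ₀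
  filter_upwards [hslope, self_mem_nhdsWithin] with t ht (htpos : 0 < t)
  have hφt : φ 0 + c' * t < φ t := by
    rw [slope_def_field, sub_zero, lt_div_iff₀ htpos] at ht
    linarith
  have h2at : 2 * a * t < c' * t := mul_lt_mul_of_pos_right hc' htpos
  have hg' := hderiv t (by nlinarith)
  exact ⟨φ t - (2 * a * t + b), by linarith, hg'.sub (hasDerivAt_quadratic a b t)⟩

theorem not_isLocalMax_sub_quadratic {g φ : ℝ → ℝ} {a b c : ℝ}
    (hg : ContinuousAt g 0) (hφ : HasDerivAt φ c 0) (ha : 0 ≤ a) (hc : 2 * a < c)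
    (hderiv : ∀ t, φ t ≠ 0 → HasDerivAt g (φ t) t) :
    ¬ IsLocalMax (fun t => g t - (a * t ^ 2 + b * t)) 0 := by
  intro hmax
  have hφ₀ : φ 0 = 0 ∨ φ 0 = b := by
    refine or_iff_not_imp_left.2 fun hne => ?_
    have hq := hasDerivAt_quadratic a b 0
    rw [mul_zero, zero_add] at hq
    linarith [hmax.hasDerivAt_eq_zero ((hderiv 0 hne).sub hq)]
  have hφ₀' : max 0 b ≤ φ 0 ∨ φ 0 ≤ min 0 b := by
    rcases hφ₀ with h | h <;> rw [h] <;> simp [le_total]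
  rcases hφ₀' with hφ₀' | hφ₀'
  · exact not_isLocalMax_sub_quadratic_of_max_le hg hφ ha hc (fun t ht => hderiv t ht.ne')
      hφ₀' hmax
  -- the reflection `t ↦ -t` reduces the case `φ 0 ≤ min 0 b` to the previous one
  have hneg : ∀ t : ℝ, HasDerivAt (fun s : ℝ => -s) (-1) t := fun t => hasDerivAt_neg t
  refine not_isLocalMax_sub_quadratic_of_max_le (g := fun t => g (-t)) (φ := fun t => -φ (-t))
    (b := -b) ?_ ?_ ha hc ?_ (by simpa using hφ₀') ?_
  · rw [← neg_zero] at hg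
    exact hg.comp continuous_neg.continuousAt
  · have hφ' : HasDerivAt φ c (-0) := by rwa [neg_zero]
    simpa using (hφ'.comp 0 (hneg 0)).fun_neg
  · intro t ht
    simpa [Function.comp_def] using (hderiv (-t) (by linarith)).comp t (hneg t)
  · rw [← neg_zero] at hmax
    simpa [Function.comp_def] using hmax.comp_continuous continuous_neg.continuousAt

theorem lap_le_of_isLocalMax_sub_sq {d : ℕ} {u : EuclideanSpace ℝ (Fin d) → ℝ} {a : ℝ}
    (ha : 0 ≤ a) {x₀ x : EuclideanSpace ℝ (Fin d)} (hu : ContinuousAt u x)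
    (hmax : IsLocalMax (fun y => u y - a * ‖y - x₀‖ ^ 2) x) :
    lap u x ≤ 2 * a * d := by
  by_contra! hlap
  obtain ⟨i, -, hi⟩ : ∃ i ∈ Finset.univ, 2 * a < fderiv ℝ
      (fun y => fderiv ℝ u y (EuclideanSpace.single i 1)) x (EuclideanSpace.single i 1) :=
    Finset.exists_lt_of_sum_lt (by simpa [lap, mul_comm] using hlap)
  set e : EuclideanSpace ℝ (Fin d) := EuclideanSpace.single i 1
  set du : EuclideanSpace ℝ (Fin d) → ℝ := fun y => fderiv ℝ u y e
  set L : ℝ → EuclideanSpace ℝ (Fin d) := fun t => x + t • e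
  have hL0 : L 0 = x := by simp [L]
  have hL : ∀ t : ℝ, HasDerivAt L e t := fun t => by
    simpa only [one_smul] using ((hasDerivAt_id' t).smul_const e).const_add x
  have hsq : ∀ t : ℝ, a * ‖L t - x₀‖ ^ 2
      = a * ‖x - x₀‖ ^ 2 + (a * t ^ 2 + 2 * a * inner ℝ (x - x₀) e * t) := fun t => by
    rw [add_sub_right_comm, norm_add_sq_real, real_inner_smul_right, norm_smul,
      show ‖e‖ = 1 by simp [e], mul_one, Real.norm_eq_abs, sq_abs]
    ring
  -- `2a < ∂²u/∂eᵢ²(x)` forces `du` to be differentiable at `x`: otherwise that value is a junk `0`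
  have hdiff : DifferentiableAt ℝ du x := by
    by_contra h
    simp [fderiv_zero_of_not_differentiableAt h] at hi
    linarith
  refine not_isLocalMax_sub_quadratic (g := u ∘ L) (φ := du ∘ L)
    (b := 2 * a * inner ℝ (x - x₀) e) ?_ ?_ ha hi ?_ ?_
  · exact hu.comp_of_eq (hL 0).continuousAt hL0
  · exact hdiff.hasFDerivAt.comp_hasDerivAt_of_eq 0 (hL 0) hL0.symm
  · intro t ht
    have hdu : DifferentiableAt ℝ u (L t) := by
      by_contra h
      exact ht (by simp [du, fderiv_zero_of_not_differentiableAt h])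
    exact hdu.hasFDerivAt.comp_hasDerivAt t (hL t)
  · have hshift : (fun t => (u ∘ L) t - (a * t ^ 2 + 2 * a * inner ℝ (x - x₀) e * t))
        = fun t => u (L t) - a * ‖L t - x₀‖ ^ 2 + a * ‖x - x₀‖ ^ 2 := by
      ext t
      rw [Function.comp_apply, hsq]
      ring
    rw [← hL0] at hmax
    rw [hshift]
    exact (hmax.comp_continuous (hL 0).continuousAt).add isLocalMax_const

theorem IsCompact.le_biSup_of_continuousOn {X α : Type*} [TopologicalSpace X]
    [ConditionallyCompleteLinearOrder α] [TopologicalSpace α] [ClosedIciTopology α]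
    {s : Set X} {u : X → α} (hs : IsCompact s) (hu : ContinuousOn u s) {y : X} (hy : y ∈ s) :
    u y ≤ ⨆ x ∈ s, u x :=
  have : Nonempty α := ⟨u y⟩
  le_ciSup₂ (f := fun x (_ : x ∈ s) => u x)
    ((hs.bddAbove_image hu).mono (by simp [subset_def])) y hy

theorem exists_mem_closedBall_sq_le {d : ℕ} {u : EuclideanSpace ℝ (Fin d) → ℝ}
    {lam a ρ : ℝ} {x₀ : EuclideanSpace ℝ (Fin d)} (hu : ContinuousOn u (closedBall x₀ ρ))
    (hlap : ∀ x ∈ ball x₀ ρ, 0 < u x → lam ≤ lap u x) (ha : 0 ≤ a) (hlam : 2 * a * d < lam)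
    (hρ : 0 ≤ ρ) (hx₀ : 0 < u x₀) :
    ∃ y ∈ closedBall x₀ ρ, a * ρ ^ 2 ≤ u y := by
  obtain ⟨y, hy, hmax⟩ := (isCompact_closedBall x₀ ρ).exists_isMaxOn
    (f := fun x => u x - a * ‖x - x₀‖ ^ 2) (nonempty_closedBall.2 hρ) (hu.sub (by fun_prop))
  have hwy : u x₀ ≤ u y - a * ‖y - x₀‖ ^ 2 := by
    simpa using hmax (mem_closedBall_self hρ)
  have huy : 0 < u y := by nlinarith
  refine ⟨y, hy, ?_⟩
  have hρy : ρ ≤ ‖y - x₀‖ := by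
    by_contra! hlt
    have hy' : y ∈ ball x₀ ρ := by rwa [mem_ball, dist_eq_norm]
    have hnhds := closedBall_mem_nhds_of_mem hy'
    linarith [hlap y hy' huy, lap_le_of_isLocalMax_sub_sq ha (hu.continuousAt hnhds)
      (hmax.isLocalMax hnhds)]
  nlinarith [pow_le_pow_left₀ hρ hρy 2]

theorem mul_sub_norm_sq_le_biSup {d : ℕ} {u : EuclideanSpace ℝ (Fin d) → ℝ}
    {lam a r : ℝ} {x₀ : EuclideanSpace ℝ (Fin d)} (hu : ContinuousOn u (closedBall 0 r))
    (hlap : ∀ x ∈ closedBall 0 r, 0 < u x → lam ≤ lap u x) (ha : 0 ≤ a) (hlam : 2 * a * d < lam)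
    (hx₀ : 0 < u x₀) (hx₀r : ‖x₀‖ ≤ r) :
    a * (r - ‖x₀‖) ^ 2 ≤ ⨆ x ∈ closedBall 0 r, u x := by
  have hsub : closedBall x₀ (r - ‖x₀‖) ⊆ closedBall 0 r :=
    closedBall_subset_closedBall' (by rw [dist_zero_right]; linarith)
  obtain ⟨y, hy, hay⟩ := exists_mem_closedBall_sq_le (hu.mono hsub)
    (fun x hx => hlap x (hsub (ball_subset_closedBall hx))) ha hlam (sub_nonneg.2 hx₀r) hx₀
  exact hay.trans ((isCompact_closedBall 0 r).le_biSup_of_continuousOn hu (hsub hy))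

theorem quadratic_nondegeneracy_general {d : ℕ}
    (u f : EuclideanSpace ℝ (Fin d) → ℝ) (lam mu : ℝ) (hlam : 0 < lam)
    (hu_cont : ContinuousOn u (Metric.closedBall (0 : EuclideanSpace ℝ (Fin d)) 1))
    (hf : ∀ x ∈ Metric.ball (0 : EuclideanSpace ℝ (Fin d)) 1, lam ≤ f x ∧ f x ≤ mu)
    (heq : ∀ x ∈ Metric.ball (0 : EuclideanSpace ℝ (Fin d)) 1, 0 < u x → lap u x = f x)
    (h0 : (0 : EuclideanSpace ℝ (Fin d)) ∈ closure {x | 0 < u x}) :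
    ∃ r₀ > (0:ℝ), ∀ r ∈ Set.Ioo (0:ℝ) r₀,
      lam / (2 * (d:ℝ)) * r ^ 2 ≤
        ⨆ x ∈ Metric.closedBall (0 : EuclideanSpace ℝ (Fin d)) r, u x := by
  refine ⟨1, one_pos, fun r ⟨hr, hr1⟩ => ?_⟩
  have hlap : ∀ x ∈ closedBall (0 : EuclideanSpace ℝ (Fin d)) r, 0 < u x → lam ≤ lap u x :=
    fun x hx hux => by
      have hx1 := closedBall_subset_ball hr1 hx
      exact heq x hx1 hux ▸ (hf x hx1).1
  have hbound : ∀ ε ∈ Ioo 0 (min r lam), (lam - ε) / (2 * d) * (r - ε) ^ 2 ≤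
      ⨆ x ∈ closedBall (0 : EuclideanSpace ℝ (Fin d)) r, u x := by
    rintro ε ⟨hε, hεmin⟩
    obtain ⟨hεr, hεlam⟩ := lt_min_iff.1 hεmin
    obtain ⟨x₀, hx₀, hx₀ε⟩ := mem_closure_iff.1 h0 ε hε
    rw [dist_zero_left] at hx₀ε
    have h2a : 2 * ((lam - ε) / (2 * d)) * d < lam := by
      rcases (Nat.cast_nonneg d : (0 : ℝ) ≤ d).eq_or_lt with hd | hd
      · simp [← hd, hlam]
      · field_simp
        linarith
    calc (lam - ε) / (2 * d) * (r - ε) ^ 2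
        ≤ (lam - ε) / (2 * d) * (r - ‖x₀‖) ^ 2 := by gcongr
      _ ≤ _ := mul_sub_norm_sq_le_biSup (hu_cont.mono (closedBall_subset_closedBall hr1.le))
          hlap (div_nonneg (by linarith) (by positivity)) h2a hx₀ (by linarith)
  have hlim : Tendsto (fun ε => (lam - ε) / (2 * d) * (r - ε) ^ 2) (𝓝[>] 0)
      (𝓝 (lam / (2 * d) * r ^ 2)) := by
    simpa using ((by fun_prop : Continuous fun ε : ℝ => (lam - ε) / (2 * d) * (r - ε) ^ 2).tendsto
      0).mono_left nhdsWithin_le_nhds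
  exact le_of_tendsto hlim (mem_of_superset (Ioo_mem_nhdsGT (lt_min hr hlam)) hbound)

/-- quadratic nondegeneracy for the obstacle problem:
`sup_{B_r} u ≥ (λ/(2d)) r²` for all sufficiently small `r`. -/
theorem quadratic_nondegeneracy {d : ℕ} (hd : 1 ≤ d)
    (u f : EuclideanSpace ℝ (Fin d) → ℝ) (lam mu : ℝ) (hlam : 0 < lam)
    (hu_nonneg : ∀ x ∈ Metric.ball (0 : EuclideanSpace ℝ (Fin d)) 1, 0 ≤ u x)
    (hu_cont : ContinuousOn u (Metric.closedBall (0 : EuclideanSpace ℝ (Fin d)) 1))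
    (hf : ∀ x ∈ Metric.ball (0 : EuclideanSpace ℝ (Fin d)) 1, lam ≤ f x ∧ f x ≤ mu)
    (heq : ∀ x ∈ Metric.ball (0 : EuclideanSpace ℝ (Fin d)) 1, 0 < u x → lap u x = f x)
    (h0 : (0 : EuclideanSpace ℝ (Fin d)) ∈ closure {x | 0 < u x}) :
    ∃ r₀ > (0:ℝ), ∀ r ∈ Set.Ioo (0:ℝ) r₀,
      lam / (2 * (d:ℝ)) * r ^ 2 ≤
        ⨆ x ∈ Metric.closedBall (0 : EuclideanSpace ℝ (Fin d)) r, u x :=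
  quadratic_nondegeneracy_general u f lam mu hlam hu_cont hf heq h0
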